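/- In ℚ^10, let v_1 = (1,0,0,0,1,1,0,0,1,0), v_2 = (1,1,0,0,0,0,1,0,0,1), v_3 = (0,1,1,0,0,1,0,1,0,0), v_4 = (0,0,1,1,0,0,1,0,1,0), v_5 = (0,0,0,1,1,0,0,1,0,1) (the fan vectors), and let F be their ℚ-linear span. Then: (i) F has dimension 5; (ii) v_1 + v_2 + v_3 + v_4 + v_5 = (2,2,2,2,2,2,2,2,2,2), so F contains the all-ones vector 𝟙 = (1,...,1); and (iii) F is invariant under the coordinate-permutation action of each of the permutations α = (1 5)(2 8)(4 7), σ = (2 5 7 6 10 9)(3 8 4), and φ = (1 2 3 4 5)(6 7 8 9 10), where a permutation g acts on (x_1,...,x_10) by sending it to (x_{g^{-1}(1)},...,x_{g^{-1}(10)}). -/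

import Mathlib

/-!
Each of `α`, `σ`, `φ` permutes the five fan vectors (`α` swaps `v_2, v_5` and fixes the others,
`σ` swaps `v_1, v_2` and cycles `v_3 ↦ v_5 ↦ v_4 ↦ v_3`, `φ` cycles `v_i ↦ v_{i+1}`), so it
preserves their span. Every coordinate lies in the support of exactly two fan vectors, whence the
sum `(2,…,2)`. Independence: on the first five coordinates a relation `∑ c_j v_j = 0` reads
`c_j + c_{j+1} = 0` around a 5-cycle, which has odd length and so forces `c = 0`.
-/

/-- The fan vectors `v_1, …, v_5` in `ℚ^10`. -/
def fanVec : Fin 5 → (Fin 10 → ℚ)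
  | 0 => ![1, 0, 0, 0, 1, 1, 0, 0, 1, 0]
  | 1 => ![1, 1, 0, 0, 0, 0, 1, 0, 0, 1]
  | 2 => ![0, 1, 1, 0, 0, 1, 0, 1, 0, 0]
  | 3 => ![0, 0, 1, 1, 0, 0, 1, 0, 1, 0]
  | 4 => ![0, 0, 0, 1, 1, 0, 0, 1, 0, 1]

/-- `F` is the `ℚ`-linear span of the fan vectors. -/
def fanSpan : Submodule ℚ (Fin 10 → ℚ) := Submodule.span ℚ (Set.range fanVec)

/-- The permutation `α = (1 5)(2 8)(4 7)` of `{1,…,10}`, on `Fin 10`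
(symbol `i` corresponds to index `i-1`). -/
def permAlpha : Equiv.Perm (Fin 10) := Equiv.swap 0 4 * Equiv.swap 1 7 * Equiv.swap 3 6

/-- The permutation `σ = (2 5 7 6 10 9)(3 8 4)` of `{1,…,10}`, on `Fin 10`. -/
def permSigma : Equiv.Perm (Fin 10) :=
  List.formPerm [(1 : Fin 10), 4, 6, 5, 9, 8] * List.formPerm [(2 : Fin 10), 7, 3]

/-- The permutation `φ = (1 2 3 4 5)(6 7 8 9 10)` of `{1,…,10}`, on `Fin 10`. -/
def permPhi : Equiv.Perm (Fin 10) :=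
  List.formPerm [(0 : Fin 10), 1, 2, 3, 4] * List.formPerm [(5 : Fin 10), 6, 7, 8, 9]

open Submodule

theorem Submodule.comp_mem_span_range {R κ ι : Type*} [Semiring R] {v : ι → κ → R} {f : κ → κ}
    (h : ∀ j, v j ∘ f ∈ span R (Set.range v)) {x : κ → R} (hx : x ∈ span R (Set.range v)) :
    x ∘ f ∈ span R (Set.range v) :=
  (span_le (p := (span R (Set.range v)).comap (LinearMap.funLeft R R f))).mpr
    (Set.range_subset_iff.mpr h) hx

lemma linearIndependent_fanVec : LinearIndependent ℚ fanVec := by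
  refine Fintype.linearIndependent_iff.mpr fun c hc => ?_
  have hcoord (i : Fin 10) : ∑ j, c j * fanVec j i = 0 := by
    simpa using congrFun hc i
  have h0 := hcoord 0; have h1 := hcoord 1; have h2 := hcoord 2
  have h3 := hcoord 3; have h4 := hcoord 4
  simp only [fanVec, Fin.sum_univ_five, Matrix.cons_val, mul_one, mul_zero, add_zero, zero_add]
    at h0 h1 h2 h3 h4
  intro j; fin_cases j <;> dsimp <;> linarith

lemma sum_fanVec : ∑ j, fanVec j = fun _ => 2 := by
  funext i
  fin_cases i <;> norm_num [Fin.sum_univ_five, fanVec]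

lemma fanVec_comp_perm_inv_mem_range {g : Equiv.Perm (Fin 10)}
    (hg : g ∈ ({permAlpha, permSigma, permPhi} : Set (Equiv.Perm (Fin 10)))) (j : Fin 5) :
    fanVec j ∘ ⇑g⁻¹ ∈ Set.range fanVec := by
  have hperm : ∀ j', ∃ k, ∀ i, fanVec j' (g⁻¹ i) = fanVec k i := by
    rcases hg with rfl | rfl | rfl <;> decide
  obtain ⟨k, hk⟩ := hperm j
  exact ⟨k, funext fun i => (hk i).symm⟩

/-- (i) `F` has dimension 5; (ii) `v_1 + ⋯ + v_5 = (2,…,2)`, so `F` contains the all-ones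
vector; (iii) `F` is invariant under the coordinate-permutation action
`(g • x) i = x (g⁻¹ i)` of each of `α`, `σ`, `φ`. -/
theorem stmt11 :
    Module.finrank ℚ fanSpan = 5 ∧
    (∑ i : Fin 5, fanVec i) = (fun _ => 2) ∧
    (fun _ => (1 : ℚ)) ∈ fanSpan ∧
    (∀ g ∈ ({permAlpha, permSigma, permPhi} : Set (Equiv.Perm (Fin 10))),
      ∀ x ∈ fanSpan, (fun i => x (g⁻¹ i)) ∈ fanSpan) := by
  refine ⟨?_, sum_fanVec, ?_, fun g hg x hx => ?_⟩
  · rw [fanSpan, finrank_span_eq_card linearIndependent_fanVec, Fintype.card_fin]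
  · have hone : (fun _ => (1 : ℚ)) = (2 : ℚ)⁻¹ • ∑ j, fanVec j := by
      rw [sum_fanVec]; funext; norm_num
    rw [hone]
    exact smul_mem _ _ (sum_mem fun j _ => subset_span ⟨j, rfl⟩)
  · exact comp_mem_span_range (fun j => subset_span (fanVec_comp_perm_inv_mem_range hg j)) hx
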